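/- arXiv:1904.08029 — 4 statements merged into one kernel-verified Lean document; each statement's English description precedes it below -/
import Mathlib

section
/- Let ρ : [0,∞) → ℝ be continuous with ρ(u) ≥ Φ > 0 for all u, and let γ ∈ [0,1). Every bounded solution f of the ODE (1−γ) f'(x) = ρ(x) f(x) − γ on [0,∞) is given by f(x) = (γ/(1−γ)) ∫ₓ^∞ exp(−(1/(1−γ)) ∫ₓ^y ρ(u) du) dy; i.e., the bounded solution is unique. -/
/-!
Fix `x ≥ 0`, put `c = 1/(1-γ)` and `E y = exp (-c ∫ₓʸ ρ)`. The ODE makes `(f E)' = -cγ E`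
on `[x, ∞)`. Since `ρ ≥ Φ`, `E` decays like `exp (-cΦ (y - x))`, so it is integrable and, `f`
being bounded, `f E → 0`. Integrating `(f E)'` over `[x, ∞)` then gives `f x = cγ ∫ₓ^∞ E`.
-/

open Set MeasureTheory Filter Topology

section IntegratingFactor

variable {ρ : ℝ → ℝ} {a c Φ : ℝ}

theorem mul_sub_le_intervalIntegral {y : ℝ} (hay : a ≤ y)
    (hρi : IntervalIntegrable ρ volume a y) (hρ : ∀ u ∈ Icc a y, Φ ≤ ρ u) :
    Φ * (y - a) ≤ ∫ u in a..y, ρ u := by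
  simpa [mul_comm] using
    intervalIntegral.integral_mono_on hay intervalIntegrable_const hρi hρ

theorem exp_neg_mul_intervalIntegral_le (hc : 0 ≤ c) (hρc : Continuous ρ)
    (hρ : ∀ u ≥ a, Φ ≤ ρ u) {y : ℝ} (hay : a ≤ y) :
    Real.exp (-c * ∫ u in a..y, ρ u) ≤ Real.exp (c * Φ * a) * Real.exp (-(c * Φ) * y) := by
  have hlow := mul_sub_le_intervalIntegral hay (hρc.intervalIntegrable a y)
    fun u hu => hρ u hu.1
  rw [← Real.exp_add, Real.exp_le_exp]
  nlinarith

theorem hasDerivAt_exp_neg_mul_intervalIntegral (hρc : Continuous ρ) (y : ℝ) :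
    HasDerivAt (fun y => Real.exp (-c * ∫ u in a..y, ρ u))
      (-c * ρ y * Real.exp (-c * ∫ u in a..y, ρ u)) y := by
  have hI : HasDerivAt (fun y => ∫ u in a..y, ρ u) (ρ y) y :=
    intervalIntegral.integral_hasDerivAt_right (hρc.intervalIntegrable a y)
      (hρc.stronglyMeasurableAtFilter _ _) hρc.continuousAt
  simpa [mul_comm] using (hI.const_mul (-c)).exp

theorem integrableOn_exp_neg_mul_intervalIntegral (hc : 0 < c) (hΦ : 0 < Φ)
    (hρc : Continuous ρ) (hρ : ∀ u ≥ a, Φ ≤ ρ u) :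
    IntegrableOn (fun y => Real.exp (-c * ∫ u in a..y, ρ u)) (Ioi a) := by
  have hcont : Continuous fun y => Real.exp (-c * ∫ u in a..y, ρ u) :=
    continuous_iff_continuousAt.2 fun y =>
      (hasDerivAt_exp_neg_mul_intervalIntegral hρc y).continuousAt
  refine ((exp_neg_integrableOn_Ioi a (mul_pos hc hΦ)).const_mul
    (Real.exp (c * Φ * a))).mono' hcont.aestronglyMeasurable.restrict ?_
  filter_upwards [ae_restrict_mem measurableSet_Ioi] with y hy
  rw [Real.norm_of_nonneg (Real.exp_pos _).le]
  exact exp_neg_mul_intervalIntegral_le hc.le hρc hρ (le_of_lt hy)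

theorem tendsto_exp_neg_mul_intervalIntegral_atTop (hc : 0 < c) (hΦ : 0 < Φ)
    (hρc : Continuous ρ) (hρ : ∀ u ≥ a, Φ ≤ ρ u) :
    Tendsto (fun y => Real.exp (-c * ∫ u in a..y, ρ u)) atTop (𝓝 0) := by
  have hdecay :
      Tendsto (fun y => Real.exp (c * Φ * a) * Real.exp (-(c * Φ) * y)) atTop (𝓝 0) := by
    simpa using ((Real.tendsto_exp_atBot.comp
      (tendsto_id.const_mul_atTop_of_neg (neg_lt_zero.2 (mul_pos hc hΦ)))).const_mul
        (Real.exp (c * Φ * a)))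
  refine squeeze_zero' (Eventually.of_forall fun y => (Real.exp_pos _).le) ?_ hdecay
  filter_upwards [eventually_ge_atTop a] with y hy
  exact exp_neg_mul_intervalIntegral_le hc.le hρc hρ hy

theorem eq_mul_integral_Ioi_of_hasDerivAt_of_bounded {f f' : ℝ → ℝ} {b M : ℝ} (hc : 0 < c)
    (hΦ : 0 < Φ) (hρc : Continuous ρ) (hρ : ∀ u ≥ a, Φ ≤ ρ u)
    (hderiv : ∀ y ≥ a, HasDerivAt f (f' y) y) (hode : ∀ y ≥ a, f' y = c * (ρ y * f y - b))
    (hbdd : ∀ y ≥ a, |f y| ≤ M) :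
    f a = c * b * ∫ y in Ioi a, Real.exp (-c * ∫ u in a..y, ρ u) := by
  set E : ℝ → ℝ := fun y => Real.exp (-c * ∫ u in a..y, ρ u) with hE
  have hprod : ∀ y ∈ Ici a, HasDerivAt (fun y => f y * E y) (-(c * b) * E y) y := by
    intro y hy
    refine ((hderiv y hy).mul (hasDerivAt_exp_neg_mul_intervalIntegral hρc y)).congr_deriv ?_
    rw [hode y hy]
    ring
  have hlim : Tendsto (fun y => f y * E y) atTop (𝓝 0) := by
    rw [show (fun y => f y * E y) = fun y => E y * f y by ext; ring]
    refine (tendsto_exp_neg_mul_intervalIntegral_atTop hc hΦ hρc hρ).zero_mul_isBoundedUnder_le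
      (isBoundedUnder_of_eventually_le (a := M) ?_)
    filter_upwards [eventually_ge_atTop a] with y hy
    exact hbdd y hy
  have hFTC := integral_Ioi_of_hasDerivAt_of_tendsto' hprod
    ((integrableOn_exp_neg_mul_intervalIntegral hc hΦ hρc hρ).const_mul (-(c * b))) hlim
  simp only [hE, intervalIntegral.integral_same, mul_zero, Real.exp_zero, mul_one,
    integral_const_mul] at hFTC
  linarith

end IntegratingFactor

theorem stmt3 (Φ γ : ℝ) (hΦ : 0 < Φ) (hγ : γ ∈ Set.Ico (0:ℝ) 1)
    (ρ : ℝ → ℝ) (hρc : Continuous ρ) (hρ : ∀ u, 0 ≤ u → Φ ≤ ρ u)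
    (f f' : ℝ → ℝ) (hderiv : ∀ x, 0 ≤ x → HasDerivAt f (f' x) x)
    (hode : ∀ x, 0 ≤ x → (1 - γ) * f' x = ρ x * f x - γ)
    (M : ℝ) (hbdd : ∀ x, 0 ≤ x → |f x| ≤ M) :
    ∀ x, 0 ≤ x → f x = (γ / (1 - γ)) *
      ∫ y in Set.Ici x, Real.exp (-(1 / (1 - γ)) * ∫ u in x..y, ρ u) := by
  intro x hx
  have h1γ : 0 < 1 - γ := sub_pos.2 hγ.2
  have hode' : ∀ y ≥ x, f' y = 1 / (1 - γ) * (ρ y * f y - γ) := fun y hy => by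
    rw [← hode y (hx.trans hy)]
    field_simp
  rw [integral_Ici_eq_integral_Ioi, div_eq_mul_one_div, mul_comm γ]
  exact eq_mul_integral_Ioi_of_hasDerivAt_of_bounded (one_div_pos.2 h1γ) hΦ hρc
    (fun u hu => hρ u (hx.trans hu)) (fun y hy => hderiv y (hx.trans hy)) hode'
    (fun y hy => hbdd y (hx.trans hy))
end

section
/- Let W^{(q)} be the Brownian scale function as above with μ ∈ ℝ, q > 0. Then the ratio W₀(x) := W^{(q)}(x)/W^{(q)'}(x) is strictly increasing on (0,∞) and satisfies lim_{x→∞} W₀(x) = 1/θ₁ = (μ + √(μ²+2q))/(2q), and 0 < W₀(x) < (μ + √(μ²+2q))/(2q) for all x > 0. -/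
theorem stmt9 (μ q : ℝ) (hq : 0 < q) :
    let θ₁ := -μ + Real.sqrt (μ ^ 2 + 2 * q)
    let θ₂ := -(μ + Real.sqrt (μ ^ 2 + 2 * q))
    let W : ℝ → ℝ := fun x =>
      (Real.exp (θ₁ * x) - Real.exp (θ₂ * x)) / Real.sqrt (μ ^ 2 + 2 * q)
    let W' : ℝ → ℝ := fun x =>
      (θ₁ * Real.exp (θ₁ * x) - θ₂ * Real.exp (θ₂ * x)) / Real.sqrt (μ ^ 2 + 2 * q)
    let W₀ : ℝ → ℝ := fun x => W x / W' x
    StrictMonoOn W₀ (Set.Ioi 0) ∧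
    Filter.Tendsto W₀ Filter.atTop (nhds ((μ + Real.sqrt (μ ^ 2 + 2 * q)) / (2 * q))) ∧
    (∀ x, 0 < x → 0 < W₀ x ∧ W₀ x < (μ + Real.sqrt (μ ^ 2 + 2 * q)) / (2 * q)) := by
  intro θ₁ θ₂ W W' W₀
  set s := Real.sqrt (μ ^ 2 + 2 * q) with hs_def
  have hs2 : s ^ 2 = μ ^ 2 + 2 * q := Real.sq_sqrt (by positivity)
  have hs0 : 0 < s := Real.sqrt_pos.mpr (by positivity)
  have hθ₁ : 0 < θ₁ := by simp only [θ₁]; nlinarith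
  have hθ₂ : θ₂ < 0 := by simp only [θ₂]; nlinarith
  have hdiff : θ₂ - θ₁ < 0 := by linarith
  have hden : ∀ x : ℝ, 0 < θ₁ - θ₂ * Real.exp ((θ₂ - θ₁) * x) := by
    intro x
    have := Real.exp_pos ((θ₂ - θ₁) * x)
    nlinarith
  have key : ∀ x : ℝ, W₀ x =
      (1 - Real.exp ((θ₂ - θ₁) * x)) / (θ₁ - θ₂ * Real.exp ((θ₂ - θ₁) * x)) := by
    intro x
    have hE : Real.exp ((θ₂ - θ₁) * x) * Real.exp (θ₁ * x) = Real.exp (θ₂ * x) := by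
      rw [← Real.exp_add]; ring_nf
    have h1 : (0:ℝ) < θ₁ * Real.exp (θ₁ * x) - θ₂ * Real.exp (θ₂ * x) := by
      have := Real.exp_pos (θ₁ * x); have := Real.exp_pos (θ₂ * x); nlinarith
    have h2 := hden x
    show (W x) / (W' x) = _
    simp only [W, W']
    rw [div_div_div_cancel_right₀ (ne_of_gt hs0)]
    rw [div_eq_div_iff (ne_of_gt h1) (ne_of_gt h2)]
    linear_combination (θ₁ - θ₂) * hE
  have hlim : (1 : ℝ) / θ₁ = (μ + s) / (2 * q) := by
    rw [div_eq_div_iff (ne_of_gt hθ₁) (by positivity)]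
    simp only [θ₁]
    nlinarith
  refine ⟨?_, ?_, ?_⟩
  · intro x hx y hy hxy
    rw [key x, key y]
    have hx2 := hden x
    have hy2 := hden y
    rw [div_lt_div_iff₀ hx2 hy2]
    have huv : Real.exp ((θ₂ - θ₁) * y) < Real.exp ((θ₂ - θ₁) * x) := by
      apply Real.exp_lt_exp.mpr
      nlinarith
    nlinarith [Real.exp_pos ((θ₂ - θ₁) * x), Real.exp_pos ((θ₂ - θ₁) * y)]
  · have hfun : W₀ = fun x =>
        (1 - Real.exp ((θ₂ - θ₁) * x)) / (θ₁ - θ₂ * Real.exp ((θ₂ - θ₁) * x)) :=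
      funext key
    rw [hfun, ← hlim]
    have hE0 : Filter.Tendsto (fun x : ℝ => Real.exp ((θ₂ - θ₁) * x)) Filter.atTop (nhds 0) := by
      apply Real.tendsto_exp_atBot.comp
      exact Filter.tendsto_id.const_mul_atTop_of_neg hdiff
    have h1 : Filter.Tendsto (fun x : ℝ => 1 - Real.exp ((θ₂ - θ₁) * x)) Filter.atTop (nhds 1) := by
      simpa using tendsto_const_nhds.sub hE0
    have h2 : Filter.Tendsto (fun x : ℝ => θ₁ - θ₂ * Real.exp ((θ₂ - θ₁) * x)) Filter.atTop
        (nhds θ₁) := by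
      simpa using tendsto_const_nhds.sub (tendsto_const_nhds.mul hE0)
    exact h1.div h2 (ne_of_gt hθ₁)
  · intro x hx
    rw [key x]
    have h2 := hden x
    have hu1 : Real.exp ((θ₂ - θ₁) * x) < 1 := by
      rw [show (1:ℝ) = Real.exp 0 by simp]
      apply Real.exp_lt_exp.mpr
      nlinarith
    have hu0 := Real.exp_pos ((θ₂ - θ₁) * x)
    constructor
    · apply div_pos (by linarith) h2
    · rw [div_lt_div_iff₀ h2 (by positivity)]
      simp only [θ₁, θ₂] at *
      nlinarith [mul_pos hu0 hq, sq_nonneg (μ + s)]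
end

section
/- Let ρ : [0,∞) → [Φ,∞) be continuous with Φ > 0, γ₁, γ₂ ∈ [0,1) and x₁ > 0. Define f piecewise by f(x) = (γ₁/(1−γ₁)) ∫ₓ^{x₁} exp(−(1/(1−γ₁))∫ₓ^y ρ) dy + exp(−(1/(1−γ₁))∫ₓ^{x₁} ρ) · (γ₂/(1−γ₂)) ∫_{x₁}^∞ exp(−(1/(1−γ₂))∫_{x₁}^y ρ) dy for 0 < x < x₁, and f(x) = (γ₂/(1−γ₂)) ∫ₓ^∞ exp(−(1/(1−γ₂))∫ₓ^y ρ) dy for x ≥ x₁. Then f is continuous at x₁ (f(x₁−) = f(x₁)), f satisfies (1−γ₁)f'(x) = ρ(x)f(x) − γ₁ on (0,x₁), and (1−γ₂)f'(x) = ρ(x)f(x) − γ₂ on (x₁,∞). -/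
/-!
Write `P(t) = ∫ₚᵗ ρ`. The discount kernel factors as
`exp (-c ∫ₓʸ ρ) = exp (c P x) · exp (-c P y)`, so each discounted integral
`∫ₓ^z exp (-c ∫ₓʸ ρ) dy` (with `z` finite or `∞`) is `exp (c P x)` times the integral of the
fixed function `exp (-c P y)` from `x` to `z`. The product rule then gives the linear equation
`F' = c ρ F - 1`, and with `c = 1/(1-γ)` this is `(1-γ) F' = ρ F - γ` after scaling by
`γ/(1-γ)`. The lower bound `ρ ≥ Φ > 0` makes the kernel exponentially small, so the improper
integral converges. Continuity at `x₁` holds because the formula for `x < x₁` defines a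
differentiable function on all of `ℝ` whose value at `x₁` is `f x₁`.
-/

open Set MeasureTheory Real

theorem Continuous.hasDerivAt_integral_Ici {φ : ℝ → ℝ} (hφ : Continuous φ) {p x : ℝ}
    (hint : IntegrableOn φ (Ici p)) (hx : p < x) :
    HasDerivAt (fun t => ∫ y in Ici t, φ y) (-φ x) x := by
  have hI : HasDerivAt (fun t => (∫ y in Ici p, φ y) - ∫ y in p..t, φ y) (-φ x) x := by
    simpa using (hφ.integral_hasStrictDerivAt p x).hasDerivAt.const_sub (∫ y in Ici p, φ y)
  refine hI.congr_of_eventuallyEq ?_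
  filter_upwards [Ioi_mem_nhds hx] with t ht
  linarith [intervalIntegral.integral_Ici_sub_Ici' hint
    (hint.mono_set (Ici_subset_Ici.2 (le_of_lt ht)))]

section Discount

variable {ρ : ℝ → ℝ}

theorem exp_neg_mul_integral_eq_mul (hρ : Continuous ρ) (c p x y : ℝ) :
    exp (-c * ∫ u in x..y, ρ u) = exp (c * ∫ u in p..x, ρ u) * exp (-c * ∫ u in p..y, ρ u) := by
  rw [← exp_add, ← intervalIntegral.integral_interval_sub_left (hρ.intervalIntegrable p y)
    (hρ.intervalIntegrable p x)]
  ring_nf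

theorem integrableOn_exp_neg_mul_integral (hρ : Continuous ρ) {Φ c p : ℝ} (hΦ : 0 < Φ)
    (hc : 0 < c) (hρΦ : ∀ u, p ≤ u → Φ ≤ ρ u) :
    IntegrableOn (fun y => exp (-c * ∫ u in p..y, ρ u)) (Ici p) := by
  have hexp : IntegrableOn (fun y => exp (c * Φ * p) * exp (-(c * Φ) * y)) (Ici p) :=
    ((integrableOn_Ici_iff_integrableOn_Ioi (by exact enorm_ne_top)).2
      (exp_neg_integrableOn_Ioi p (by positivity))).const_mul _
  refine Integrable.mono' hexp (by fun_prop) ?_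
  refine (ae_restrict_iff' measurableSet_Ici).2 (Filter.Eventually.of_forall fun y hy => ?_)
  have hlow : (y - p) * Φ ≤ ∫ u in p..y, ρ u := by
    simpa using intervalIntegral.integral_mono_on (mem_Ici.1 hy) (intervalIntegrable_const (μ := volume))
      (hρ.intervalIntegrable p y) fun u hu => hρΦ u hu.1
  rw [norm_of_nonneg (exp_pos _).le, ← exp_add]
  exact exp_le_exp.2 (by nlinarith)

theorem hasDerivAt_exp_mul_integral_mul (hρ : Continuous ρ) {I : ℝ → ℝ} {c p x : ℝ}
    (hI : HasDerivAt I (-exp (-c * ∫ u in p..x, ρ u)) x) :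
    HasDerivAt (fun t => exp (c * ∫ u in p..t, ρ u) * I t)
      (c * ρ x * (exp (c * ∫ u in p..x, ρ u) * I x) - 1) x := by
  have hE := ((hρ.integral_hasStrictDerivAt p x).hasDerivAt.const_mul c).exp
  refine (hE.mul hI).congr_deriv ?_
  have hinv : exp (c * ∫ u in p..x, ρ u) * exp (-c * ∫ u in p..x, ρ u) = 1 := by
    rw [← exp_add]; simp
  linear_combination -hinv

theorem hasDerivAt_integral_exp_neg_mul_integral (hρ : Continuous ρ) (c z x : ℝ) :
    HasDerivAt (fun t => ∫ y in t..z, exp (-c * ∫ u in t..y, ρ u))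
      (c * ρ x * (∫ y in x..z, exp (-c * ∫ u in x..y, ρ u)) - 1) x := by
  have hfactor : ∀ t, ∫ y in t..z, exp (-c * ∫ u in t..y, ρ u) =
      exp (c * ∫ u in 0..t, ρ u) * ∫ y in t..z, exp (-c * ∫ u in 0..y, ρ u) := by
    intro t
    simp only [exp_neg_mul_integral_eq_mul hρ c 0 t, intervalIntegral.integral_const_mul]
  have hψ : Continuous fun y => exp (-c * ∫ u in 0..y, ρ u) := by
    have := hρ.integral_hasStrictDerivAt 0
    fun_prop
  simp only [hfactor]
  exact hasDerivAt_exp_mul_integral_mul hρ <|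
    intervalIntegral.integral_hasDerivAt_left (hψ.intervalIntegrable _ _)
      (hψ.stronglyMeasurableAtFilter _ _) hψ.continuousAt

theorem hasDerivAt_integral_Ici_exp_neg_mul_integral (hρ : Continuous ρ) {c p x : ℝ}
    (hint : IntegrableOn (fun y => exp (-c * ∫ u in p..y, ρ u)) (Ici p)) (hx : p < x) :
    HasDerivAt (fun t => ∫ y in Ici t, exp (-c * ∫ u in t..y, ρ u))
      (c * ρ x * (∫ y in Ici x, exp (-c * ∫ u in x..y, ρ u)) - 1) x := by
  have hfactor : ∀ t, ∫ y in Ici t, exp (-c * ∫ u in t..y, ρ u) =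
      exp (c * ∫ u in p..t, ρ u) * ∫ y in Ici t, exp (-c * ∫ u in p..y, ρ u) := by
    intro t
    simp only [exp_neg_mul_integral_eq_mul hρ c p t, integral_const_mul]
  have hψ : Continuous fun y => exp (-c * ∫ u in p..y, ρ u) := by
    have := hρ.integral_hasStrictDerivAt p
    fun_prop
  simp only [hfactor]
  exact hasDerivAt_exp_mul_integral_mul hρ (hψ.hasDerivAt_integral_Ici hint hx)

theorem hasDerivAt_exp_neg_mul_integral_left (hρ : Continuous ρ) (c z x : ℝ) :
    HasDerivAt (fun t => exp (-c * ∫ u in t..z, ρ u)) (c * ρ x * exp (-c * ∫ u in x..z, ρ u)) x := by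
  have hI := intervalIntegral.integral_hasDerivAt_left (hρ.intervalIntegrable x z)
    (hρ.stronglyMeasurableAtFilter _ _) hρ.continuousAt
  refine (hI.const_mul (-c)).exp.congr_deriv ?_
  ring

theorem HasDerivAt.const_div_one_sub_mul {F : ℝ → ℝ} {γ r x : ℝ} (hγ : γ ≠ 1)
    (hF : HasDerivAt F (1 / (1 - γ) * r * F x - 1) x) :
    HasDerivAt (fun t => γ / (1 - γ) * F t) ((r * (γ / (1 - γ) * F x) - γ) / (1 - γ)) x := by
  have : 1 - γ ≠ 0 := sub_ne_zero.2 hγ.symm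
  refine (hF.const_mul _).congr_deriv ?_
  field_simp

theorem hasDerivAt_discounted_integral_add_exp (hρ : Continuous ρ) {γ : ℝ} (hγ : γ ≠ 1)
    (z C x : ℝ) :
    HasDerivAt (fun t => γ / (1 - γ) * (∫ y in t..z, exp (-(1 / (1 - γ)) * ∫ u in t..y, ρ u))
        + exp (-(1 / (1 - γ)) * ∫ u in t..z, ρ u) * C)
      ((ρ x * (γ / (1 - γ) * (∫ y in x..z, exp (-(1 / (1 - γ)) * ∫ u in x..y, ρ u))
        + exp (-(1 / (1 - γ)) * ∫ u in x..z, ρ u) * C) - γ) / (1 - γ)) x := by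
  have : 1 - γ ≠ 0 := sub_ne_zero.2 hγ.symm
  refine ((hasDerivAt_integral_exp_neg_mul_integral hρ _ z x).const_div_one_sub_mul hγ |>.add
    ((hasDerivAt_exp_neg_mul_integral_left hρ _ z x).mul_const C)).congr_deriv ?_
  field_simp
  ring

end Discount

theorem stmt18 (Φ γ₁ γ₂ x₁ : ℝ) (hΦ : 0 < Φ) (hγ₁ : γ₁ ∈ Set.Ico (0:ℝ) 1)
    (hγ₂ : γ₂ ∈ Set.Ico (0:ℝ) 1) (hx₁ : 0 < x₁)
    (ρ : ℝ → ℝ) (hρc : Continuous ρ) (hρ : ∀ u, 0 ≤ u → Φ ≤ ρ u)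
    (f : ℝ → ℝ)
    (hflt : ∀ x, 0 < x → x < x₁ → f x =
      (γ₁ / (1 - γ₁)) * (∫ y in x..x₁, Real.exp (-(1 / (1 - γ₁)) * ∫ u in x..y, ρ u))
      + Real.exp (-(1 / (1 - γ₁)) * ∫ u in x..x₁, ρ u) *
        ((γ₂ / (1 - γ₂)) *
          ∫ y in Set.Ici x₁, Real.exp (-(1 / (1 - γ₂)) * ∫ u in x₁..y, ρ u)))
    (hfge : ∀ x, x₁ ≤ x → f x =
      (γ₂ / (1 - γ₂)) *
        ∫ y in Set.Ici x, Real.exp (-(1 / (1 - γ₂)) * ∫ u in x..y, ρ u)) :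
    Filter.Tendsto f (nhdsWithin x₁ (Set.Iio x₁)) (nhds (f x₁)) ∧
    (∀ x, 0 < x → x < x₁ → HasDerivAt f ((ρ x * f x - γ₁) / (1 - γ₁)) x) ∧
    (∀ x, x₁ < x → HasDerivAt f ((ρ x * f x - γ₂) / (1 - γ₂)) x) := by
  have hleft := hasDerivAt_discounted_integral_add_exp hρc hγ₁.2.ne x₁
    ((γ₂ / (1 - γ₂)) * ∫ y in Ici x₁, exp (-(1 / (1 - γ₂)) * ∫ u in x₁..y, ρ u))
  have hint := integrableOn_exp_neg_mul_integral hρc hΦ (one_div_pos.2 (sub_pos.2 hγ₂.2))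
    fun u hu => hρ u (hx₁.le.trans hu)
  refine ⟨?_, fun x hx hxx₁ => ?_, fun x hx => ?_⟩
  · convert ((hleft x₁).continuousAt.tendsto.mono_left nhdsWithin_le_nhds).congr' ?_ using 2
    · simp [hfge x₁ le_rfl]
    · filter_upwards [Ioo_mem_nhdsLT hx₁] with y hy using (hflt y hy.1 hy.2).symm
  · rw [hflt x hx hxx₁]
    refine (hleft x).congr_of_eventuallyEq ?_
    filter_upwards [Ioo_mem_nhds hx hxx₁] with y hy using hflt y hy.1 hy.2
  · rw [hfge x hx.le]
    refine ((hasDerivAt_integral_Ici_exp_neg_mul_integral hρc hint hx).const_div_one_sub_mul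
      hγ₂.2.ne).congr_of_eventuallyEq ?_
    filter_upwards [Ioi_mem_nhds hx] with y hy using hfge y hy.le
end

section
/- Let ρ : [0,∞) → [Φ,∞) be continuous with Φ > 0 and γ₂ ∈ (0,1), and suppose ρ(x) → Φ as x → ∞. Then f(x) = (γ₂/(1−γ₂)) ∫ₓ^∞ exp(−(1/(1−γ₂)) ∫ₓ^y ρ(u) du) dy satisfies lim_{x→∞} f(x) = γ₂/Φ. -/
/-!
For constant `ρ ≡ m` the integral is explicit and gives `f ≡ γ₂ / m`. If `Φ ≤ ρ ≤ M` on `[x, ∞)`,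
the inner integral lies between `Φ (y - x)` and `M (y - x)`, so `γ₂ / M ≤ f x ≤ γ₂ / Φ`;
since `ρ → Φ`, every `M > Φ` is eventually admissible.
-/

open Set MeasureTheory Filter Real Topology

section ExpDecay

variable {ρ : ℝ → ℝ} {k a b x : ℝ}

lemma exp_neg_mul_sub_eq (a x y : ℝ) : exp (-a * (y - x)) = exp (a * x) * exp (-a * y) := by
  rw [← exp_add]; ring_nf

lemma integrableOn_exp_neg_mul_sub_Ici (ha : 0 < a) (x : ℝ) :
    IntegrableOn (fun y => exp (-a * (y - x))) (Ici x) := by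
  simp_rw [exp_neg_mul_sub_eq]
  exact (integrableOn_Ici_iff_integrableOn_Ioi).2 <|
    (integrableOn_exp_mul_Ioi (neg_neg_of_pos ha) x).const_mul _

lemma integral_exp_neg_mul_sub_Ici (ha : 0 < a) (x : ℝ) :
    ∫ y in Ici x, exp (-a * (y - x)) = a⁻¹ := by
  simp_rw [integral_Ici_eq_integral_Ioi, exp_neg_mul_sub_eq, integral_const_mul,
    integral_exp_mul_Ioi (neg_neg_of_pos ha)]
  rw [neg_mul, exp_neg]
  field_simp [(exp_pos (a * x)).ne']

lemma exp_neg_mul_integral_le (hk : 0 ≤ k) (hρ : Continuous ρ) {y : ℝ} (hxy : x ≤ y)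
    (ha : ∀ u ∈ Icc x y, a ≤ ρ u) :
    exp (-k * ∫ u in x..y, ρ u) ≤ exp (-(k * a) * (y - x)) := by
  have : a * (y - x) ≤ ∫ u in x..y, ρ u := by
    simpa [mul_comm] using intervalIntegral.integral_mono_on (μ := volume) hxy intervalIntegrable_const
      (hρ.intervalIntegrable x y) ha
  exact exp_le_exp.2 (by nlinarith)

lemma exp_neg_mul_le_integral (hk : 0 ≤ k) (hρ : Continuous ρ) {y : ℝ} (hxy : x ≤ y)
    (hb : ∀ u ∈ Icc x y, ρ u ≤ b) :
    exp (-(k * b) * (y - x)) ≤ exp (-k * ∫ u in x..y, ρ u) := by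
  have : ∫ u in x..y, ρ u ≤ b * (y - x) := by
    simpa [mul_comm] using intervalIntegral.integral_mono_on (μ := volume) hxy (hρ.intervalIntegrable x y)
      intervalIntegrable_const hb
  exact exp_le_exp.2 (by nlinarith)

lemma integrableOn_exp_neg_mul_primitive (hk : 0 < k) (ha : 0 < a) (hρ : Continuous ρ)
    (hρa : ∀ u, x ≤ u → a ≤ ρ u) :
    IntegrableOn (fun y => exp (-k * ∫ u in x..y, ρ u)) (Ici x) := by
  refine (integrableOn_exp_neg_mul_sub_Ici (mul_pos hk ha) x).mono' ?_ ?_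
  · exact (continuous_exp.comp (continuous_const.mul
      (intervalIntegral.continuous_primitive (hρ.intervalIntegrable · ·) x))).aestronglyMeasurable
  · filter_upwards [self_mem_ae_restrict measurableSet_Ici] with y (hy : x ≤ y)
    rw [norm_of_nonneg (exp_pos _).le]
    exact exp_neg_mul_integral_le hk.le hρ hy fun u hu => hρa u hu.1

lemma setIntegral_exp_neg_mul_primitive_le (hk : 0 < k) (ha : 0 < a) (hρ : Continuous ρ)
    (hρa : ∀ u, x ≤ u → a ≤ ρ u) :
    ∫ y in Ici x, exp (-k * ∫ u in x..y, ρ u) ≤ (k * a)⁻¹ := by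
  rw [← integral_exp_neg_mul_sub_Ici (mul_pos hk ha) x]
  exact setIntegral_mono_on (integrableOn_exp_neg_mul_primitive hk ha hρ hρa)
    (integrableOn_exp_neg_mul_sub_Ici (mul_pos hk ha) x) measurableSet_Ici
    fun y hy => exp_neg_mul_integral_le hk.le hρ hy fun u hu => hρa u hu.1

lemma inv_le_setIntegral_exp_neg_mul_primitive (hk : 0 < k) (hb : 0 < b) (hρ : Continuous ρ)
    (hint : IntegrableOn (fun y => exp (-k * ∫ u in x..y, ρ u)) (Ici x))
    (hρb : ∀ u, x ≤ u → ρ u ≤ b) :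
    (k * b)⁻¹ ≤ ∫ y in Ici x, exp (-k * ∫ u in x..y, ρ u) := by
  rw [← integral_exp_neg_mul_sub_Ici (mul_pos hk hb) x]
  exact setIntegral_mono_on (integrableOn_exp_neg_mul_sub_Ici (mul_pos hk hb) x) hint
    measurableSet_Ici fun y hy => exp_neg_mul_le_integral hk.le hρ hy fun u hu => hρb u hu.1

end ExpDecay

theorem stmt19 (Φ γ₂ : ℝ) (hΦ : 0 < Φ) (hγ : γ₂ ∈ Set.Ioo (0:ℝ) 1)
    (ρ : ℝ → ℝ) (hρc : Continuous ρ) (hρ : ∀ u, 0 ≤ u → Φ ≤ ρ u)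
    (hρlim : Filter.Tendsto ρ Filter.atTop (nhds Φ))
    (f : ℝ → ℝ)
    (hf : ∀ x, f x = (γ₂ / (1 - γ₂)) *
      ∫ y in Set.Ici x, Real.exp (-(1 / (1 - γ₂)) * ∫ u in x..y, ρ u)) :
    Filter.Tendsto f Filter.atTop (nhds (γ₂ / Φ)) := by
  obtain ⟨hγ₀, hγ₁⟩ := hγ
  have hk : 0 < 1 / (1 - γ₂) := by simpa using hγ₁
  have hscale : ∀ a, γ₂ / (1 - γ₂) * (1 / (1 - γ₂) * a)⁻¹ = γ₂ / a := fun a => by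
    field_simp [(sub_pos.2 hγ₁).ne']
  have hρx : ∀ x, 0 ≤ x → ∀ u, x ≤ u → Φ ≤ ρ u := fun x hx u hu => hρ u (hx.trans hu)
  have hupper : ∀ᶠ x in atTop, f x ≤ γ₂ / Φ := by
    filter_upwards [eventually_ge_atTop 0] with x hx
    rw [hf, ← hscale Φ]
    gcongr
    exact setIntegral_exp_neg_mul_primitive_le hk hΦ hρc (hρx x hx)
  have hlower : ∀ M, Φ < M → ∀ᶠ x in atTop, γ₂ / M ≤ f x := by
    intro M hM
    obtain ⟨x₀, hx₀⟩ := eventually_atTop.1 (hρlim.eventually_lt_const hM)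
    filter_upwards [eventually_ge_atTop 0, eventually_ge_atTop x₀] with x hx hxx₀
    rw [hf, ← hscale M]
    gcongr
    exact inv_le_setIntegral_exp_neg_mul_primitive hk (hΦ.trans hM) hρc
      (integrableOn_exp_neg_mul_primitive hk hΦ hρc (hρx x hx))
      fun u hu => (hx₀ u (hxx₀.trans hu)).le
  refine tendsto_order.2 ⟨fun c hc => ?_, fun c hc => hupper.mono fun x hx => hx.trans_lt hc⟩
  have hdiv : Tendsto (γ₂ / ·) (𝓝[>] Φ) (𝓝 (γ₂ / Φ)) :=
    ((continuousAt_const.div continuousAt_id hΦ.ne').tendsto).mono_left nhdsWithin_le_nhds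
  obtain ⟨M, hcM, hM⟩ := ((hdiv.eventually (lt_mem_nhds hc)).and self_mem_nhdsWithin).exists
  exact (hlower M hM).mono fun x hx => hcM.trans_le hx
end
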